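/- Let W ∈ ℂ^{N×N} be Hermitian positive semidefinite and let h ∈ ℂ^N satisfy h^H W h > 0. Define w = W h / √(h^H W h). Then: (a) |w^H h|² = h^H W h, i.e., the rank-one matrix w w^H satisfies Tr(w w^H h h^H) = Tr(W h h^H); (b) ‖w‖₂² ≤ Tr(W); and (c) for every g ∈ ℂ^N, |w^H g|² ≤ g^H W g, i.e., Tr(w w^H g g^H) ≤ Tr(W g g^H). -/

import Mathlib

/-!
With `s = hᴴWh`, the vector `w = Wh/√s` satisfies `|wᴴg|² = |gᴴWh|²/s`. Cauchy–Schwarz for the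
positive semidefinite form `(x, y) ↦ xᴴWy` bounds this by `gᴴWg`, with equality at `g = h`;
applying the bound to the standard basis vectors and summing gives `‖w‖² ≤ ∑ Wᵢᵢ = Tr W`.
-/

open Matrix
open scoped ComplexOrder

namespace Matrix

variable {𝕜 n : Type*} [RCLike 𝕜] [Fintype n]

lemma norm_star_smul_dotProduct (c : 𝕜) (v g : n → 𝕜) :
    ‖star (c • v) ⬝ᵥ g‖ = ‖c‖ * ‖star g ⬝ᵥ v‖ := by
  rw [star_smul, smul_dotProduct, star_dotProduct, smul_eq_mul, norm_mul, norm_star, norm_star]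

namespace PosSemidef

variable {A : Matrix n n 𝕜}

lemma norm_star_dotProduct_mulVec_self (hA : A.PosSemidef) (x : n → 𝕜) :
    ‖star x ⬝ᵥ A *ᵥ x‖ = RCLike.re (star x ⬝ᵥ A *ᵥ x) := by
  simpa using congrArg RCLike.re (RCLike.norm_of_nonneg' (hA.dotProduct_mulVec_nonneg x))

lemma norm_star_dotProduct_mulVec_sq_le (hA : A.PosSemidef) (x y : n → 𝕜) :
    ‖star x ⬝ᵥ A *ᵥ y‖ ^ 2 ≤ RCLike.re (star x ⬝ᵥ A *ᵥ x) * RCLike.re (star y ⬝ᵥ A *ᵥ y) := by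
  let _ := A.toSeminormedAddCommGroup hA
  let _ := A.toInnerProductSpace hA
  have := inner_mul_inner_self_le (𝕜 := 𝕜) x y
  rw [norm_inner_symm y x, ← sq] at this
  rwa [dotProduct_comm (star x), dotProduct_comm (star x), dotProduct_comm (star y)]

end PosSemidef

lemma re_star_dotProduct_self_le_re_trace [DecidableEq n] {A : Matrix n n 𝕜} {w : n → 𝕜}
    (hw : ∀ g, ‖star w ⬝ᵥ g‖ ^ 2 ≤ RCLike.re (star g ⬝ᵥ A *ᵥ g)) :
    RCLike.re (star w ⬝ᵥ w) ≤ RCLike.re A.trace := by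
  have hcoord : ∀ i, ‖w i‖ ^ 2 ≤ RCLike.re (A i i) := fun i => by
    simpa [Pi.single_star, mulVec_single_one, dotProduct_single_one] using hw (Pi.single i 1)
  calc RCLike.re (star w ⬝ᵥ w) = ∑ i, ‖w i‖ ^ 2 := by
        simp [dotProduct, RCLike.conj_mul]
    _ ≤ ∑ i, RCLike.re (A i i) := Finset.sum_le_sum fun i _ => hcoord i
    _ = RCLike.re A.trace := by simp [trace]

end Matrix

/-- Rank-reduction lemma (underlying Proposition 2): for Hermitian positive
semidefinite `W` and a channel `h` with `hᴴ W h > 0`, the vector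
`w = W h / √(hᴴ W h)` yields a rank-one matrix `w wᴴ` that (a) preserves the
desired-signal power `|wᴴ h|² = hᴴ W h`, (b) uses no more power,
`‖w‖₂² ≤ Tr(W)`, and (c) does not increase interference:
`|wᴴ g|² ≤ gᴴ W g` for every `g`. -/
theorem rank_one_reduction {N : ℕ}
    (W : Matrix (Fin N) (Fin N) ℂ) (hW : W.PosSemidef)
    (h : Fin N → ℂ) (hpos : 0 < (star h ⬝ᵥ W.mulVec h).re)
    (w : Fin N → ℂ)
    (hwdef : w = ((Real.sqrt (star h ⬝ᵥ W.mulVec h).re : ℂ)⁻¹) • W.mulVec h) :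
    ‖star w ⬝ᵥ h‖ ^ 2 = (star h ⬝ᵥ W.mulVec h).re ∧
    (star w ⬝ᵥ w).re ≤ (W.trace).re ∧
    ∀ g : Fin N → ℂ,
      ‖star w ⬝ᵥ g‖ ^ 2 ≤ (star g ⬝ᵥ W.mulVec g).re := by
  set s := (star h ⬝ᵥ W *ᵥ h).re
  have hw : ∀ g, ‖star w ⬝ᵥ g‖ ^ 2 = ‖star g ⬝ᵥ W *ᵥ h‖ ^ 2 / s := fun g => by
    rw [hwdef, norm_star_smul_dotProduct, norm_inv, Complex.norm_real, Real.norm_of_nonneg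
      (Real.sqrt_nonneg s), mul_pow, inv_pow, Real.sq_sqrt hpos.le, inv_mul_eq_div]
  have interference : ∀ g, ‖star w ⬝ᵥ g‖ ^ 2 ≤ (star g ⬝ᵥ W *ᵥ g).re := fun g => by
    rw [hw, div_le_iff₀ hpos]
    exact hW.norm_star_dotProduct_mulVec_sq_le g h
  refine ⟨?_, re_star_dotProduct_self_le_re_trace interference, interference⟩
  rw [hw, hW.norm_star_dotProduct_mulVec_self]
  change s ^ 2 / s = s
  field_simp
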